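/- For all integers ℓ ≥ 1 and q ≥ 3, the map W is a bijection from the set of (ℓ,q)-partial multi Kreweras words to the set L_{V×[ℓ]}(R^q) of V-strict labelings of V×[ℓ] with labels in [q]. -/

import Mathlib

open scoped Classical

/-- The poset `V` on `{A, B, C}` with cover relations `A ⋖ B` and `A ⋖ C`. -/
inductive V : Type
  | A | B | C
deriving DecidableEq

instance : Fintype V where
  elems := {V.A, V.B, V.C}
  complete := by intro x; cases x <;> simp

instance : PartialOrder V where
  le x y := x = y ∨ x = V.A
  le_refl x := Or.inl rfl
  le_trans x y z h1 h2 := by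
    rcases h1 with rfl | rfl
    · exact h2
    · exact Or.inr rfl
  le_antisymm x y h1 h2 := by
    rcases h1 with rfl | rfl
    · rfl
    · rcases h2 with rfl | rfl <;> rfl

/-- A `V`-strict labeling of `V × [ℓ]` with labels in `[q]` (i.e. an element of
`L_{V×[ℓ]}(R^q)`): labels are in `{1, …, q}`, strictly increase along copies of `V`,
and weakly increase along the fibers. -/
def IsVL (ℓ q : ℕ) (f : V → Fin ℓ → ℕ) : Prop :=
  (∀ p i, 1 ≤ f p i ∧ f p i ≤ q) ∧
  (∀ i, f V.A i < f V.B i ∧ f V.A i < f V.C i) ∧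
  (∀ p, Monotone (f p))

/-- The label of `f` at `(p, i)` is raisable: there is another `V`-strict labeling `g`
with `g p i > f p i` agreeing with `f` at all `(p', i')` with `p' ≠ p`. -/
def Raisable (ℓ q : ℕ) (f : V → Fin ℓ → ℕ) (p : V) (i : Fin ℓ) : Prop :=
  ∃ g, IsVL ℓ q g ∧ f p i < g p i ∧ ∀ p' i', p' ≠ p → g p' i' = f p' i'

/-- The label of `f` at `(p, i)` is lowerable. -/
def Lowerable (ℓ q : ℕ) (f : V → Fin ℓ → ℕ) (p : V) (i : Fin ℓ) : Prop :=
  ∃ g, IsVL ℓ q g ∧ g p i < f p i ∧ ∀ p' i', p' ≠ p → g p' i' = f p' i'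

/-- The `k`-th Bender–Knuth involution: in each fiber, the free labels consist of `a`
raisable labels equal to `k` followed by `b` lowerable labels equal to `k+1`; they are
replaced by `b` copies of `k` followed by `a` copies of `k+1`. -/
noncomputable def BK (ℓ q k : ℕ) (f : V → Fin ℓ → ℕ) : V → Fin ℓ → ℕ :=
  fun p i =>
    let S := Finset.univ.filter fun j : Fin ℓ => f p j = k ∧ Raisable ℓ q f p j
    let T := Finset.univ.filter fun j : Fin ℓ => f p j = k + 1 ∧ Lowerable ℓ q f p j
    let U := S ∪ T
    if i ∈ U then (if (U.filter fun j => j < i).card < T.card then k else k + 1)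
    else f p i

/-- `P`-strict promotion `Pro = τ_{q-1} ∘ ⋯ ∘ τ_2 ∘ τ_1`. -/
noncomputable def Pro (ℓ q : ℕ) (f : V → Fin ℓ → ℕ) : V → Fin ℓ → ℕ :=
  (List.range (q - 1)).foldl (fun g k => BK ℓ q (k + 1) g) f

/-- An `(ℓ,q)`-partial multi Kreweras word: a sequence `w_1, …, w_q` of (possibly empty)
multisets from `{A,B,C}` with `ℓ` letters each of `A`, `B`, `C` in total, such that for
each `i ∈ [q]`, neither the number of `B`'s nor the number of `C`'s in `w_1 ⋯ w_i`
exceeds the number of `A`'s in `w_1 ⋯ w_{i−1}`. (Blocks are indexed by `1, …, q`;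
`w i = 0` outside this range.) -/
def IsPMKW (ℓ q : ℕ) (w : ℕ → Multiset V) : Prop :=
  (∀ i, w i ≠ 0 → 1 ≤ i ∧ i ≤ q) ∧
  (∀ p : V, (∑ i ∈ Finset.Icc 1 q, (w i).count p) = ℓ) ∧
  (∀ i, 1 ≤ i → i ≤ q →
    (∑ t ∈ Finset.Icc 1 i, (w t).count V.B) ≤
      (∑ t ∈ Finset.Icc 1 (i - 1), (w t).count V.A) ∧
    (∑ t ∈ Finset.Icc 1 i, (w t).count V.C) ≤
      (∑ t ∈ Finset.Icc 1 (i - 1), (w t).count V.A))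

/-- The defining relation of the map `W`: the multiplicity of the letter `p` in the block
`w_i` equals the number of indices `j` with `f(p, j) = i`. -/
def WRel (ℓ : ℕ) (w : ℕ → Multiset V) (f : V → Fin ℓ → ℕ) : Prop :=
  ∀ (p : V) (i : ℕ),
    (w i).count p = (Finset.univ.filter fun j : Fin ℓ => f p j = i).card

/-!
A weakly increasing `g : Fin ℓ → ℕ` is recovered from its fiber sizes through
`g j ≤ i ↔ j < #{g ≤ i}`, and every finitely supported profile of fiber sizes of total `ℓ`
arises this way. So `W` matches words with fiberwise monotone labelings, and the prefix
counts of a word are the cumulative counts `#{f p ≤ i}` of its labeling. Through the same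
equivalence the ballot condition `#{f p ≤ i} ≤ #{f A < i}` for `p = B, C` says exactly that
`f(A, j) < f(p, j)` for all `j`.
-/

open Finset

section MonotoneFibers

variable {ℓ : ℕ}

lemma eq_of_forall_sum_range_succ_eq {M : Type*} [AddCancelCommMonoid M] {a b : ℕ → M}
    (h : ∀ i, ∑ t ∈ range (i + 1), a t = ∑ t ∈ range (i + 1), b t) (i : ℕ) : a i = b i := by
  cases i with
  | zero => simpa using h 0
  | succ i =>
    have hi := h (i + 1)
    rw [sum_range_succ, sum_range_succ _ (i + 1), h i] at hi
    exact add_left_cancel hi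

lemma card_filter_le_eq_sum_range (g : Fin ℓ → ℕ) (i : ℕ) :
    #{j | g j ≤ i} = ∑ t ∈ range (i + 1), #{j | g j = t} := by
  simp only [sum_card_fiberwise_eq_card_filter, mem_range, Nat.lt_succ_iff]

lemma Monotone.lt_card_filter_le_iff {g : Fin ℓ → ℕ} (hg : Monotone g) (j : Fin ℓ) (i : ℕ) :
    (j : ℕ) < #{j' | g j' ≤ i} ↔ g j ≤ i :=
  Fin.lt_card_filter_univ_iff_apply_of_imp _ fun _ _ h hi => (hg h).trans hi

lemma Monotone.eq_of_card_fiber_eq {g h : Fin ℓ → ℕ} (hg : Monotone g) (hh : Monotone h)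
    (H : ∀ i, #{j | g j = i} = #{j | h j = i}) : g = h := by
  have key (j : Fin ℓ) (i : ℕ) : g j ≤ i ↔ h j ≤ i := by
    rw [← hg.lt_card_filter_le_iff, ← hh.lt_card_filter_le_iff, card_filter_le_eq_sum_range,
      card_filter_le_eq_sum_range]
    simp only [H]
  funext j
  exact le_antisymm ((key j _).2 le_rfl) ((key j _).1 le_rfl)

lemma exists_monotone_card_fiber_eq (c : ℕ → ℕ) (s : Finset ℕ) (hc : ∀ t, c t ≠ 0 → t ∈ s)
    (hs : ∑ t ∈ s, c t = ℓ) : ∃ g : Fin ℓ → ℕ, Monotone g ∧ ∀ i, #{j | g j = i} = c i := by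
  set C : ℕ → ℕ := fun i => ∑ t ∈ range (i + 1), c t
  have hC_mono : Monotone C := fun a b hab =>
    sum_le_sum_of_subset (range_subset_range.2 (by omega))
  have hC_le (i : ℕ) : C i ≤ ℓ := hs ▸ sum_le_sum_of_ne_zero fun t _ ht => hc t ht
  have hC_top : C (s.sup id) = ℓ := hs ▸ (sum_subset
    (fun t ht => mem_range.2 (Nat.lt_succ_of_le (le_sup (f := id) ht)))
    fun t _ ht => by_contra (ht ∘ hc t)).symm
  have hex (j : Fin ℓ) : ∃ i, (j : ℕ) < C i := ⟨s.sup id, by rw [hC_top]; exact j.isLt⟩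
  have key (j : Fin ℓ) (i : ℕ) : Nat.find (hex j) ≤ i ↔ (j : ℕ) < C i := by
    rw [Nat.find_le_iff]
    exact ⟨fun ⟨m, hm, h⟩ => h.trans_le (hC_mono hm), fun h => ⟨i, le_rfl, h⟩⟩
  refine ⟨fun j => Nat.find (hex j), fun a b hab => (key a _).2 ?_,
    eq_of_forall_sum_range_succ_eq fun i => ?_⟩
  · exact (Fin.le_def.1 hab).trans_lt ((key b _).1 le_rfl)
  · rw [← card_filter_le_eq_sum_range]
    simp only [key]
    rw [Fin.card_filter_val_lt]
    exact min_eq_right (hC_le i)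

lemma forall_lt_iff_card_filter_le {g h : Fin ℓ → ℕ} (hg : Monotone g) (hh : Monotone h)
    {S : Set ℕ} (hS : ∀ j, h j ∈ S) :
    (∀ j, g j < h j) ↔ ∀ i ∈ S, #{j | h j ≤ i} ≤ #{j | g j < i} := by
  refine ⟨fun H i _ => card_le_card fun j => ?_, fun H j => ?_⟩
  · simp only [mem_filter, mem_univ, true_and]
    exact (H j).trans_le
  · rw [← Fin.lt_card_filter_univ_iff_apply_of_imp (fun j' => g j' < h j)
      fun _ _ hle hlt => (hg hle).trans_lt hlt]
    exact ((hh.lt_card_filter_le_iff j (h j)).2 le_rfl).trans_le (H _ (hS j))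

end MonotoneFibers

section Words

variable {ℓ q : ℕ} {w : ℕ → Multiset V} {f : V → Fin ℓ → ℕ}

noncomputable def wordOf (f : V → Fin ℓ → ℕ) (i : ℕ) : Multiset V :=
  ∑ p, Multiset.replicate #{j | f p j = i} p

lemma wRel_wordOf (f : V → Fin ℓ → ℕ) : WRel ℓ (wordOf f) f := by
  intro p i
  simp [wordOf, Multiset.count_sum', Multiset.count_replicate]

lemma WRel.unique {w' : ℕ → Multiset V} (hw : WRel ℓ w f) (hw' : WRel ℓ w' f) : w = w' :=
  funext fun i => Multiset.ext.2 fun p => (hw p i).trans (hw' p i).symm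

lemma WRel.ne_zero_iff (hw : WRel ℓ w f) (i : ℕ) : w i ≠ 0 ↔ ∃ p j, f p j = i := by
  simp only [Ne, Multiset.eq_zero_iff_forall_notMem, not_forall, not_not, ← Multiset.count_pos,
    hw _ i, card_pos, filter_nonempty_iff, mem_univ, true_and]

lemma WRel.sum_count_Icc (hw : WRel ℓ w f) (hf : ∀ p j, 1 ≤ f p j) (p : V) (i : ℕ) :
    ∑ t ∈ Icc 1 i, (w t).count p = #{j | f p j ≤ i} := by
  simp only [hw p, sum_card_fiberwise_eq_card_filter, mem_Icc, hf, true_and]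

lemma exists_monotone_wRel (hw : IsPMKW ℓ q w) : ∃ f, (∀ p, Monotone (f p)) ∧ WRel ℓ w f := by
  choose f hmono hcard using fun p => exists_monotone_card_fiber_eq (fun t => (w t).count p)
    (Icc 1 q) (fun t ht => mem_Icc.2 (hw.1 t (by rintro h; simp [h] at ht))) (hw.2.1 p)
  exact ⟨f, hmono, fun p i => (hcard p i).symm⟩

lemma WRel.ballot_iff (hw : WRel ℓ w f) (hf : ∀ p, Monotone (f p))
    (hb : ∀ p j, 1 ≤ f p j ∧ f p j ≤ q) (p : V) :
    (∀ i, 1 ≤ i → i ≤ q →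
      ∑ t ∈ Icc 1 i, (w t).count p ≤ ∑ t ∈ Icc 1 (i - 1), (w t).count V.A) ↔
      ∀ j, f V.A j < f p j := by
  rw [forall_lt_iff_card_filter_le (hf V.A) (hf p) (S := {i | 1 ≤ i ∧ i ≤ q}) (hb p)]
  refine forall_congr' fun i => ?_
  simp only [hw.sum_count_Icc fun p j => (hb p j).1, Set.mem_ofPred_eq, and_imp]
  refine imp_congr_right fun hi => imp_congr_right fun _ => ?_
  rw [show #{j | f V.A j ≤ i - 1} = #{j | f V.A j < i} from
    congrArg card (filter_congr fun j _ => by omega)]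

lemma WRel.isPMKW_iff (hw : WRel ℓ w f) (hf : ∀ p, Monotone (f p)) :
    IsPMKW ℓ q w ↔ IsVL ℓ q f := by
  have hrange : (∀ i, w i ≠ 0 → 1 ≤ i ∧ i ≤ q) ↔ ∀ p j, 1 ≤ f p j ∧ f p j ≤ q := by
    simp only [hw.ne_zero_iff]
    exact ⟨fun h p j => h _ ⟨p, j, rfl⟩, fun h i ⟨p, j, hj⟩ => hj ▸ h p j⟩
  refine ⟨fun ⟨hsupp, _, hballot⟩ => ?_, fun ⟨hb, hstrict, _⟩ => ?_⟩
  · have hb := hrange.1 hsupp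
    refine ⟨hb, fun j => ⟨?_, ?_⟩, hf⟩
    · exact (hw.ballot_iff hf hb V.B).1 (fun i h1 h2 => (hballot i h1 h2).1) j
    · exact (hw.ballot_iff hf hb V.C).1 (fun i h1 h2 => (hballot i h1 h2).2) j
  · refine ⟨hrange.2 hb, fun p => ?_, fun i h1 h2 => ⟨?_, ?_⟩⟩
    · simp [hw.sum_count_Icc fun p j => (hb p j).1, hb]
    · exact (hw.ballot_iff hf hb V.B).2 (fun j => (hstrict j).1) i h1 h2
    · exact (hw.ballot_iff hf hb V.C).2 (fun j => (hstrict j).2) i h1 h2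

end Words

theorem stmt17_general (ℓ q : ℕ) :
    (∀ w, IsPMKW ℓ q w → ∃! f, IsVL ℓ q f ∧ WRel ℓ w f) ∧
    (∀ f, IsVL ℓ q f → ∃! w, IsPMKW ℓ q w ∧ WRel ℓ w f) := by
  refine ⟨fun w hw => ?_, fun f hf => ?_⟩
  · obtain ⟨f, hmono, hrel⟩ := exists_monotone_wRel hw
    refine ⟨f, ⟨(hrel.isPMKW_iff hmono).1 hw, hrel⟩, fun g ⟨hg, hgrel⟩ => funext fun p => ?_⟩
    exact (hg.2.2 p).eq_of_card_fiber_eq (hmono p) fun i => (hgrel p i).symm.trans (hrel p i)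
  · have hrel := wRel_wordOf f
    exact ⟨wordOf f, ⟨(hrel.isPMKW_iff hf.2.2).2 hf, hrel⟩, fun w ⟨_, hw⟩ => hw.unique hrel⟩

/-- For all `ℓ ≥ 1` and `q ≥ 3`, the map `W` is a bijection from `(ℓ,q)`-partial multi
Kreweras words to `L_{V×[ℓ]}(R^q)`: every word corresponds to a unique `V`-strict
labeling and conversely. -/
theorem stmt17 (ℓ q : ℕ) (hℓ : 1 ≤ ℓ) (hq : 3 ≤ q) :
    (∀ w, IsPMKW ℓ q w → ∃! f, IsVL ℓ q f ∧ WRel ℓ w f) ∧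
    (∀ f, IsVL ℓ q f → ∃! w, IsPMKW ℓ q w ∧ WRel ℓ w f) :=
  stmt17_general ℓ q
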